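/- arXiv:2503.16792 — 2 statements merged into one kernel-verified Lean document; each statement's English description precedes it below -/
import Mathlib

section
/- Let (θ_n)_{n≥1} be a sequence of nonnegative reals and let 0 < φ_0 < 1. Define recursively φ_n = φ_{n−1}/(1+θ_n) + θ_n/(1+θ_n). Then for all n ≥ 0 one has 0 < φ_0 ≤ φ_n ≤ φ_{n+1} < 1. -/
theorem porosity_maximum_principle (θ : ℕ → ℝ) (hθ : ∀ n, 1 ≤ n → 0 ≤ θ n)
    (φ : ℕ → ℝ) (h0 : 0 < φ 0) (h1 : φ 0 < 1)
    (hrec : ∀ n, φ (n + 1) = φ n / (1 + θ (n + 1)) + θ (n + 1) / (1 + θ (n + 1))) :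
    ∀ n, 0 < φ 0 ∧ φ 0 ≤ φ n ∧ φ n ≤ φ (n + 1) ∧ φ (n + 1) < 1 := by
  have key : ∀ n, φ 0 ≤ φ n ∧ φ n < 1 ∧ φ n ≤ φ (n + 1) := by
    intro n
    induction n with
    | zero =>
      refine ⟨le_refl _, h1, ?_⟩
      have hθ1 : (0:ℝ) ≤ θ 1 := hθ 1 le_rfl
      have hpos : (0:ℝ) < 1 + θ 1 := by linarith
      rw [hrec 0, ← add_div, le_div_iff₀ hpos]
      nlinarith
    | succ n ih =>
      obtain ⟨ih0, ih1, ih2⟩ := ih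
      have hθ1 : (0:ℝ) ≤ θ (n + 2) := hθ (n + 2) (by omega)
      have hpos : (0:ℝ) < 1 + θ (n + 2) := by linarith
      have hlt : φ (n + 1) < 1 := by
        rw [hrec n, ← add_div, div_lt_one (by linarith [hθ (n+1) (by omega)] : (0:ℝ) < 1 + θ (n+1))]
        linarith
      refine ⟨le_trans ih0 ih2, hlt, ?_⟩
      rw [hrec (n + 1), ← add_div, le_div_iff₀ hpos]
      nlinarith
  intro n
  obtain ⟨k0, k1, k2⟩ := key n
  obtain ⟨m0, m1, m2⟩ := key (n + 1)
  exact ⟨h0, k0, k2, m1⟩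
end

section
/- For all nonzero u, v ∈ ℝᵈ, the matrix-valued map u ↦ (1/|u|)·u uᵀ satisfies ‖(1/|u|)u uᵀ − (1/|v|)v vᵀ‖ ≤ 3|u − v|, where ‖·‖ denotes the operator (or Frobenius) norm. -/
open scoped BigOperators

private noncomputable def euc {n : Type*} (x : n → ℝ) : EuclideanSpace ℝ n :=
  (WithLp.equiv 2 (n → ℝ)).symm x

private lemma euc_norm {n : Type*} [Fintype n] (x : n → ℝ) :
    ‖euc x‖ = Real.sqrt (∑ i, x i ^ 2) := by
  rw [euc, EuclideanSpace.norm_eq]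
  simp

private lemma euc_add {n : Type*} (x y : n → ℝ) : euc (x + y) = euc x + euc y := rfl
private lemma euc_smul {n : Type*} (c : ℝ) (x : n → ℝ) : euc (c • x) = c • euc x := rfl
private lemma euc_sub {n : Type*} (x y : n → ℝ) : euc (x - y) = euc x - euc y := rfl

private lemma tensor_norm (d : ℕ) (x y : Fin d → ℝ) :
    ‖euc (fun p : Fin d × Fin d => x p.1 * y p.2)‖ = ‖euc x‖ * ‖euc y‖ := by
  rw [euc_norm, euc_norm, euc_norm, ← Real.sqrt_mul (by positivity)]
  congr 1
  rw [Fintype.sum_prod_type, Finset.sum_mul_sum]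
  simp [mul_pow]

theorem uuT_over_norm_lipschitz (d : ℕ) (u v : Fin d → ℝ) (hu : u ≠ 0) (hv : v ≠ 0) :
    let nrm : (Fin d → ℝ) → ℝ := fun w => Real.sqrt (∑ i, w i ^ 2)
    let A : Matrix (Fin d) (Fin d) ℝ := Matrix.of fun i j => u i * u j / nrm u
    let B : Matrix (Fin d) (Fin d) ℝ := Matrix.of fun i j => v i * v j / nrm v
    Real.sqrt (∑ i, ∑ j, (A i j - B i j) ^ 2) ≤ 3 * nrm (u - v) := by
  intro nrm A B
  have hnrm : ∀ w : Fin d → ℝ, nrm w = ‖euc w‖ := fun w => (euc_norm w).symm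
  have hueq : euc u ≠ 0 := fun h => hu (congrArg (WithLp.equiv 2 (Fin d → ℝ)) h)
  have hveq : euc v ≠ 0 := fun h => hv (congrArg (WithLp.equiv 2 (Fin d → ℝ)) h)
  have hnu : 0 < ‖euc u‖ := norm_pos_iff.2 hueq
  have hnv : 0 < ‖euc v‖ := norm_pos_iff.2 hveq
  set nu := ‖euc u‖ with hnu'
  set nv := ‖euc v‖ with hnv'
  set T1 : Fin d × Fin d → ℝ := fun p => (u p.1 - v p.1) * (u p.2 / nu) with hT1
  set T2 : Fin d × Fin d → ℝ := fun p => (v p.1 / nv) * (u p.2 - v p.2) with hT2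
  set T3 : Fin d × Fin d → ℝ := (1/nu - 1/nv) • (fun p : Fin d × Fin d => v p.1 * u p.2) with hT3
  have hM : (fun p : Fin d × Fin d => A p.1 p.2 - B p.1 p.2) = T1 + T2 + T3 := by
    funext p
    show A p.1 p.2 - B p.1 p.2 = T1 p + T2 p + T3 p
    simp only [hT1, hT2, hT3, A, B, Matrix.of_apply, Pi.smul_apply, smul_eq_mul]
    show u p.1 * u p.2 / nrm u - v p.1 * v p.2 / nrm v = _
    rw [hnrm u, hnrm v]
    field_simp
    ring
  have lhs_eq : Real.sqrt (∑ i, ∑ j, (A i j - B i j) ^ 2)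
      = ‖euc (fun p : Fin d × Fin d => A p.1 p.2 - B p.1 p.2)‖ := by
    rw [euc_norm, Fintype.sum_prod_type]
  have hT1n : ‖euc T1‖ = ‖euc (u - v)‖ := by
    have h2 : (fun j => u j / nu) = nu⁻¹ • u := by
      funext j; simp [div_eq_inv_mul]
    have hone : ‖euc (fun j => u j / nu)‖ = 1 := by
      rw [h2, euc_smul, norm_smul, Real.norm_eq_abs, abs_of_pos (inv_pos.2 hnu), ← hnu',
        inv_mul_cancel₀ (ne_of_gt hnu)]
    rw [hT1, show (fun p : Fin d × Fin d => (u p.1 - v p.1) * (u p.2 / nu))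
        = fun p : Fin d × Fin d => (fun i => u i - v i) p.1 * (fun j => u j / nu) p.2 from rfl,
      tensor_norm d (fun i => u i - v i) (fun j => u j / nu), hone, mul_one]
    rfl
  have hT2n : ‖euc T2‖ = ‖euc (u - v)‖ := by
    have h2 : (fun i => v i / nv) = nv⁻¹ • v := by
      funext j; simp [div_eq_inv_mul]
    have := tensor_norm d (fun i => v i / nv) (fun j => u j - v j)
    rw [hT2, show (fun p : Fin d × Fin d => (v p.1 / nv) * (u p.2 - v p.2))
        = fun p : Fin d × Fin d => (fun i => v i / nv) p.1 * (fun j => u j - v j) p.2 from rfl,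
      this, h2, euc_smul, norm_smul, Real.norm_eq_abs, abs_of_pos (inv_pos.2 hnv), ← hnv',
      inv_mul_cancel₀ (ne_of_gt hnv), one_mul]
    rfl
  have hT3n : ‖euc T3‖ ≤ ‖euc (u - v)‖ := by
    rw [hT3, euc_smul, norm_smul, tensor_norm d v u]
    have habs : ‖(1:ℝ)/nu - 1/nv‖ = |nv - nu| / (nu * nv) := by
      rw [Real.norm_eq_abs, div_sub_div _ _ (ne_of_gt hnu) (ne_of_gt hnv), abs_div, one_mul,
        mul_one, abs_of_pos (mul_pos hnu hnv)]
    rw [habs, ← hnu', ← hnv']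
    rw [mul_comm nv nu, div_mul_cancel₀ _ (ne_of_gt (mul_pos hnu hnv))]
    calc |nv - nu| ≤ ‖euc v - euc u‖ := abs_norm_sub_norm_le _ _
      _ = ‖euc (u - v)‖ := by rw [← euc_sub, ← norm_neg]; congr 1; simp [euc]
  rw [lhs_eq, hM, hnrm (u - v)]
  calc ‖euc (T1 + T2 + T3)‖ = ‖euc T1 + euc T2 + euc T3‖ := rfl
    _ ≤ ‖euc T1‖ + ‖euc T2‖ + ‖euc T3‖ := norm_add₃_le
    _ ≤ ‖euc (u - v)‖ + ‖euc (u - v)‖ + ‖euc (u - v)‖ := by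
        rw [hT1n, hT2n]; exact add_le_add_right hT3n _
    _ = 3 * ‖euc (u - v)‖ := by ring
end
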